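/- Let L and L' be positive integers. Let A be an L×L full-rank row-stochastic matrix with stationary distribution π = (π₁,…,π_L) having positive entries, and let f₁,…,f_L be linearly independent square-integrable probability densities on ℝᵈ; define g_ℓ(y) = Σ_{m=1}^L A[ℓ,m] f_m(y) and p(y₁,y₂) = Σ_{ℓ=1}^L π_ℓ f_ℓ(y₁) g_ℓ(y₂). Let (L', A', π', (f'_ℓ)) satisfy the same hypotheses, with associated pair density p'. If p(y₁,y₂) = p'(y₁,y₂) for almost every (y₁,y₂) ∈ ℝᵈ×ℝᵈ, then L = L'. (In particular, the order L of the hidden Markov model is identifiable from the distribution of a pair of consecutive observations.) -/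

import Mathlib

open MeasureTheory

/-!
Work with functions modulo null sets, i.e. with germs along `ae`. For almost every `y₁` the
pair density gives the identity `∑ ℓ, π ℓ f ℓ y₁ • [g ℓ] = ∑ k, π' k f' k y₁ • [g' k]` of
germs in `y₂`. The coefficient functions `π ℓ f ℓ` are linearly independent modulo null sets, so
applying any linear functional that kills the span of the `[g ℓ]` shows that every `[g' k]`
lies in that span, and symmetrically. The `[g ℓ]` are linearly independent because `A` is
invertible and the `f ℓ` are, hence both spans have dimension `L = L'`.
-/

open Filter Submodule

section GermLinearAlgebra

variable {α K V ι ι' : Type*} [Field K] [AddCommGroup V] [Module K V] {l : Filter α}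

theorem Filter.Germ.coe_sum_smul [Fintype ι] (ξ : ι → K) (f : ι → α → V) :
    ((fun a => ∑ i, ξ i • f i a : α → V) : Germ l V) = ∑ i, ξ i • (f i : Germ l V) := by
  have : (fun a => ∑ i, ξ i • f i a) = ∑ i, ξ i • f i := by ext; simp
  rw [this]
  exact map_sum (Germ.coeAddHom l) (fun i => ξ i • f i) Finset.univ

theorem linearIndependent_germ_iff [Fintype ι] {f : ι → α → K} :
    LinearIndependent K (fun i => (f i : Germ l K)) ↔
      ∀ ξ : ι → K, (∀ᶠ a in l, ∑ i, ξ i * f i a = 0) → ξ = 0 := by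
  simp only [Fintype.linearIndependent_iff, ← Germ.coe_sum_smul, smul_eq_mul, funext_iff]
  refine forall_congr' fun ξ => imp_congr_left ?_
  rw [← Germ.coe_zero, Germ.coe_eq]
  rfl

theorem eq_zero_of_eventually_sum_smul_eq_zero [Fintype ι] {c : ι → α → K}
    (hc : LinearIndependent K fun i => (c i : Germ l K)) {v : ι → V}
    (h : ∀ᶠ a in l, ∑ i, c i a • v i = 0) (i : ι) : v i = 0 := by
  rw [← Module.forall_dual_apply_eq_zero_iff K]
  intro φ
  have hφ : ∀ᶠ a in l, ∑ j, φ (v j) * c j a = 0 :=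
    h.mono fun a ha => by simpa [mul_comm] using congrArg φ ha
  exact congrFun (linearIndependent_germ_iff.1 hc _ hφ) i

theorem span_range_le_of_eventually_sum_smul_eq [Fintype ι] [Fintype ι']
    {c : ι → α → K} {c' : ι' → α → K} (hc' : LinearIndependent K fun j => (c' j : Germ l K))
    {u : ι → V} {u' : ι' → V}
    (h : ∀ᶠ a in l, ∑ i, c i a • u i = ∑ j, c' j a • u' j) :
    span K (Set.range u') ≤ span K (Set.range u) := by
  rw [span_le]
  rintro _ ⟨j, rfl⟩
  rw [SetLike.mem_coe, ← Quotient.mk_eq_zero]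
  set S := span K (Set.range u)
  refine eq_zero_of_eventually_sum_smul_eq_zero (v := S.mkQ ∘ u') hc' (h.mono fun a ha => ?_) j
  calc ∑ j, c' j a • S.mkQ (u' j) = S.mkQ (∑ i, c i a • u i) := by
        simp only [ha, map_sum, map_smul]
    _ = 0 := (Quotient.mk_eq_zero S).2 (sum_mem fun i _ => smul_mem _ _ (subset_span ⟨i, rfl⟩))

theorem card_eq_of_eventually_sum_smul_eq [Fintype ι] [Fintype ι']
    {c : ι → α → K} {c' : ι' → α → K}
    (hc : LinearIndependent K fun i => (c i : Germ l K))
    (hc' : LinearIndependent K fun j => (c' j : Germ l K))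
    {u : ι → V} {u' : ι' → V} (hu : LinearIndependent K u) (hu' : LinearIndependent K u')
    (h : ∀ᶠ a in l, ∑ i, c i a • u i = ∑ j, c' j a • u' j) :
    Fintype.card ι = Fintype.card ι' := by
  have hspan : span K (Set.range u) = span K (Set.range u') :=
    le_antisymm (span_range_le_of_eventually_sum_smul_eq hc (h.mono fun _ => Eq.symm))
      (span_range_le_of_eventually_sum_smul_eq hc' h)
  rw [← finrank_span_eq_card hu, ← finrank_span_eq_card hu', hspan]

theorem LinearIndependent.matrix_sum_smul [Fintype ι] [DecidableEq ι] {v : ι → V}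
    (hv : LinearIndependent K v)
    {A : Matrix ι ι K} (hA : IsUnit A) : LinearIndependent K fun i => ∑ j, A i j • v j :=
  (Matrix.linearIndependent_rows_iff_isUnit.2 hA).map' (Fintype.linearCombination K v)
    (LinearMap.ker_eq_bot.2 (linearIndependent_iff_injective_fintypeLinearCombination.1 hv))

theorem linearIndependent_germ_mul_left {f : ι → α → K}
    (hf : LinearIndependent K fun i => (f i : Germ l K)) {w : ι → K} (hw : ∀ i, w i ≠ 0) :
    LinearIndependent K fun i => ((fun a => w i * f i a : α → K) : Germ l K) :=
  hf.units_smul fun i => Units.mk0 (w i) (hw i)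

theorem linearIndependent_germ_matrix_sum_mul [Fintype ι] [DecidableEq ι] {f : ι → α → K}
    (hf : LinearIndependent K fun i => (f i : Germ l K)) {A : Matrix ι ι K} (hA : A.det ≠ 0) :
    LinearIndependent K fun i => ((fun a => ∑ j, A i j * f j a : α → K) : Germ l K) := by
  simp only [← smul_eq_mul, Germ.coe_sum_smul]
  exact hf.matrix_sum_smul ((Matrix.isUnit_iff_isUnit_det A).2 hA.isUnit)

end GermLinearAlgebra

theorem hmm_order_identifiable_from_pair_density_general
    {d L L' : ℕ}
    (A : Matrix (Fin L) (Fin L) ℝ) (w : Fin L → ℝ)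
    (f : Fin L → (Fin d → ℝ) → ℝ)
    (A' : Matrix (Fin L') (Fin L') ℝ) (w' : Fin L' → ℝ)
    (f' : Fin L' → (Fin d → ℝ) → ℝ)
    (hA_rank : A.det ≠ 0)
    (hw_pos : ∀ i, 0 < w i)
    (hf_li : ∀ ξ : Fin L → ℝ,
      (∀ᵐ z : Fin d → ℝ, ∑ ℓ, ξ ℓ * f ℓ z = 0) → ξ = 0)
    (hA'_rank : A'.det ≠ 0)
    (hw'_pos : ∀ i, 0 < w' i)
    (hf'_li : ∀ ξ : Fin L' → ℝ,
      (∀ᵐ z : Fin d → ℝ, ∑ ℓ, ξ ℓ * f' ℓ z = 0) → ξ = 0)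
    -- the two pair densities coincide almost everywhere
    (hpp' : ∀ᵐ y : (Fin d → ℝ) × (Fin d → ℝ),
      ∑ ℓ, w ℓ * f ℓ y.1 * (∑ m, A ℓ m * f m y.2)
        = ∑ ℓ, w' ℓ * f' ℓ y.1 * (∑ m, A' ℓ m * f' m y.2)) :
    L = L' := by
  have hf := linearIndependent_germ_iff.2 hf_li
  have hf' := linearIndependent_germ_iff.2 hf'_li
  rw [Measure.volume_eq_prod] at hpp'
  let μ : Measure (Fin d → ℝ) := volume
  have hpair : ∀ᵐ y₁ ∂μ,
      ∑ ℓ, (w ℓ * f ℓ y₁) •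
          (↑(fun y₂ => ∑ m, A ℓ m * f m y₂) : Germ (ae μ) ℝ) =
        ∑ ℓ, (w' ℓ * f' ℓ y₁) •
          (↑(fun y₂ => ∑ m, A' ℓ m * f' m y₂) : Germ (ae μ) ℝ) := by
    filter_upwards [Measure.ae_ae_of_ae_prod hpp'] with y₁ hy₁
    simp only [← Germ.coe_sum_smul, smul_eq_mul, Germ.coe_eq]
    exact hy₁
  simpa only [Fintype.card_fin] using card_eq_of_eventually_sum_smul_eq
    (linearIndependent_germ_mul_left hf fun i => (hw_pos i).ne')
    (linearIndependent_germ_mul_left hf' fun i => (hw'_pos i).ne')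
    (linearIndependent_germ_matrix_sum_mul hf hA_rank)
    (linearIndependent_germ_matrix_sum_mul hf' hA'_rank) hpair

/-- **Identifiability of the order of an HMM from the distribution of a pair of
consecutive observations.**  If two finite-state HMMs (with full-rank row-stochastic
transition matrices, positive stationary distributions, and linearly independent
square-integrable emission densities) give rise to the same density of a pair of
consecutive observations (almost everywhere), then they have the same order. -/
theorem hmm_order_identifiable_from_pair_density
    {d L L' : ℕ} (hL : 0 < L) (hL' : 0 < L')
    (A : Matrix (Fin L) (Fin L) ℝ) (w : Fin L → ℝ)
    (f : Fin L → (Fin d → ℝ) → ℝ)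
    (A' : Matrix (Fin L') (Fin L') ℝ) (w' : Fin L' → ℝ)
    (f' : Fin L' → (Fin d → ℝ) → ℝ)
    (hA_nonneg : ∀ i j, 0 ≤ A i j) (hA_rows : ∀ i, ∑ j, A i j = 1)
    (hA_rank : A.det ≠ 0)
    (hw_pos : ∀ i, 0 < w i) (hw_sum : ∑ i, w i = 1)
    (hw_stat : ∀ j, ∑ i, w i * A i j = w j)
    (hf_nonneg : ∀ ℓ z, 0 ≤ f ℓ z)
    (hf_prob : ∀ ℓ, ∫ z : Fin d → ℝ, f ℓ z = 1)
    (hf_L2 : ∀ ℓ, MemLp (f ℓ) 2 (volume : Measure (Fin d → ℝ)))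
    (hf_li : ∀ ξ : Fin L → ℝ,
      (∀ᵐ z : Fin d → ℝ, ∑ ℓ, ξ ℓ * f ℓ z = 0) → ξ = 0)
    (hA'_nonneg : ∀ i j, 0 ≤ A' i j) (hA'_rows : ∀ i, ∑ j, A' i j = 1)
    (hA'_rank : A'.det ≠ 0)
    (hw'_pos : ∀ i, 0 < w' i) (hw'_sum : ∑ i, w' i = 1)
    (hw'_stat : ∀ j, ∑ i, w' i * A' i j = w' j)
    (hf'_nonneg : ∀ ℓ z, 0 ≤ f' ℓ z)
    (hf'_prob : ∀ ℓ, ∫ z : Fin d → ℝ, f' ℓ z = 1)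
    (hf'_L2 : ∀ ℓ, MemLp (f' ℓ) 2 (volume : Measure (Fin d → ℝ)))
    (hf'_li : ∀ ξ : Fin L' → ℝ,
      (∀ᵐ z : Fin d → ℝ, ∑ ℓ, ξ ℓ * f' ℓ z = 0) → ξ = 0)
    -- the two pair densities coincide almost everywhere
    (hpp' : ∀ᵐ y : (Fin d → ℝ) × (Fin d → ℝ),
      ∑ ℓ, w ℓ * f ℓ y.1 * (∑ m, A ℓ m * f m y.2)
        = ∑ ℓ, w' ℓ * f' ℓ y.1 * (∑ m, A' ℓ m * f' m y.2)) :
    L = L' :=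
  hmm_order_identifiable_from_pair_density_general A w f A' w' f' hA_rank hw_pos hf_li hA'_rank
    hw'_pos hf'_li hpp'
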